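/- arXiv:1209.5947 — 2 statements merged into one kernel-verified Lean document; each statement's English description precedes it below -/
import Mathlib

section
/- Let c0, c3 be real numbers and let c1, c2, c1', c2' be real numbers with c1 + c2 = c1' + c2'. For velocities (c0,c1,c2,c3) define the discrete flux F_{c1,c2}(a,b,c,d) = a(1−b)·[(1−d)(c0(1−c) + c1·c) + d(c2(1−c) + c3·c)]. Then for all real u, v: F_{c1,c2}(u,u,v,v) = F_{c1',c2'}(u,u,v,v). In other words, the macroscopic flux of the pedestrian model depends on the velocities c1 and c2 only through their sum. -/
/-- Discrete flux of right-moving pedestrians of the mesoscopic model with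
slowdown velocities `c0, c1, c2, c3`. -/
noncomputable def pedFlux (c0 c1 c2 c3 a b c d : ℝ) : ℝ :=
  a * (1 - b) * ((1 - d) * (c0 * (1 - c) + c1 * c) + d * (c2 * (1 - c) + c3 * c))

theorem pedFlux_diagonal (c0 c1 c2 c3 u v : ℝ) :
    pedFlux c0 c1 c2 c3 u u v v =
      u * (1 - u) * (c0 * (1 - v) ^ 2 + (c1 + c2) * (v * (1 - v)) + c3 * v ^ 2) := by
  unfold pedFlux
  ring

/-- The macroscopic flux of the pedestrian model (the diagonal value of the
discrete flux) depends on the velocities `c1` and `c2` only through their sum. -/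
theorem pedFlux_diagonal_depends_only_on_sum (c0 c3 c1 c2 c1' c2' : ℝ)
    (hsum : c1 + c2 = c1' + c2') (u v : ℝ) :
    pedFlux c0 c1 c2 c3 u u v v = pedFlux c0 c1' c2' c3 u u v v := by
  rw [pedFlux_diagonal, pedFlux_diagonal, hsum]
end

section
/- Let c0, c1, c2, c3 be real numbers, f(u) = u(1−u), g(u) = (c3−c2−c1+c0)u² + (c2+c1−2c0)u + c0, and F(a,b,c,d) = a(1−b)·[(1−d)(c0(1−c) + c1·c) + d(c2(1−c) + c3·c)]. Let ρ⁺, ρ⁻ : ℝ → ℝ be differentiable at a point x. Then lim_{h→0, h≠0} (1/h)·[ F(ρ⁺(x), ρ⁺(x+h), ρ⁻(x), ρ⁻(x+h)) − F(ρ⁺(x−h), ρ⁺(x), ρ⁻(x−h), ρ⁻(x)) ] = f'(ρ⁺(x))·g(ρ⁻(x))·(ρ⁺)'(x) + f(ρ⁺(x))·g'(ρ⁻(x))·(ρ⁻)'(x), i.e., the scaled discrete flux difference of the mesoscopic model converges, as the cell size h tends to 0, to the spatial derivative of the macroscopic flux f(ρ⁺)g(ρ⁻). -/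
/-!
On the diagonal the discrete flux is consistent with the macroscopic one:
`F(u, u, v, v) = f(u) g(v)`. The flux difference `Φ(h)` vanishes at `h = 0`, so `Φ(h)/h` tends to
`Φ'(0)`. Writing `F(a, b, c, d) = a (1 - b) V(c, d)` with `V` the bilinear interpolation of the
slowdown velocities, the product rule gives `Φ'(0) = f'(ρ⁺) g(ρ⁻) (ρ⁺)' + f(ρ⁺) (V_c + V_d)(ρ⁻, ρ⁻) (ρ⁻)'`,
and `V_c + V_d = g'` on the diagonal because `V(v, v) = g(v)`.
-/

open Filter Topology

/-- `f(u) = u(1−u)`, the density factor of the macroscopic pedestrian flux. -/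
noncomputable def pedF (u : ℝ) : ℝ := u * (1 - u)

/-- `g(u) = (c3−c2−c1+c0)u² + (c2+c1−2c0)u + c0`, the velocity factor of the
macroscopic pedestrian flux. -/
noncomputable def pedG (c0 c1 c2 c3 u : ℝ) : ℝ :=
  (c3 - c2 - c1 + c0) * u ^ 2 + (c2 + c1 - 2 * c0) * u + c0

theorem tendsto_div_nhdsNE_zero_of_hasDerivAt {𝕜 : Type*} [NontriviallyNormedField 𝕜]
    {φ : 𝕜 → 𝕜} {φ' : 𝕜} (hφ : HasDerivAt φ φ' 0) (hφ₀ : φ 0 = 0) :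
    Tendsto (fun h => φ h / h) (𝓝[≠] 0) (𝓝 φ') :=
  hφ.tendsto_slope_zero.congr fun h => by simp [hφ₀, div_eq_inv_mul]

/-- `pedFlux c0 c1 c2 c3 a b c d` is definitionally `a * (1 - b) * pedVel c0 c1 c2 c3 c d`. -/
noncomputable def pedVel (c0 c1 c2 c3 c d : ℝ) : ℝ :=
  (1 - d) * (c0 * (1 - c) + c1 * c) + d * (c2 * (1 - c) + c3 * c)

section pedVel

variable {c0 c1 c2 c3 : ℝ}

theorem pedVel_self (v : ℝ) : pedVel c0 c1 c2 c3 v v = pedG c0 c1 c2 c3 v := by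
  unfold pedVel pedG
  ring

theorem HasDerivAt.pedVel_left {c : ℝ → ℝ} {c' t : ℝ} (hc : HasDerivAt c c' t) (d : ℝ) :
    HasDerivAt (fun t => pedVel c0 c1 c2 c3 (c t) d)
      ((c1 - c0 + (c3 - c2 - c1 + c0) * d) * c') t := by
  have affine : (fun t => pedVel c0 c1 c2 c3 (c t) d)
      = fun t => c0 + (c2 - c0) * d + (c1 - c0 + (c3 - c2 - c1 + c0) * d) * c t :=
    funext fun t => by unfold pedVel; ring
  rw [affine]
  exact (hc.const_mul _).const_add _

theorem HasDerivAt.pedVel_right {d : ℝ → ℝ} {d' t : ℝ} (c : ℝ) (hd : HasDerivAt d d' t) :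
    HasDerivAt (fun t => pedVel c0 c1 c2 c3 c (d t))
      ((c2 - c0 + (c3 - c2 - c1 + c0) * c) * d') t := by
  have affine : (fun t => pedVel c0 c1 c2 c3 c (d t))
      = fun t => c0 + (c1 - c0) * c + (c2 - c0 + (c3 - c2 - c1 + c0) * c) * d t :=
    funext fun t => by unfold pedVel; ring
  rw [affine]
  exact (hd.const_mul _).const_add _

end pedVel

theorem hasDerivAt_pedFlux_difference (c0 c1 c2 c3 : ℝ) {ρp ρm : ℝ → ℝ} {x dp dm : ℝ}
    (hρp : HasDerivAt ρp dp x) (hρm : HasDerivAt ρm dm x) :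
    HasDerivAt (fun h : ℝ =>
        pedFlux c0 c1 c2 c3 (ρp x) (ρp (x + h)) (ρm x) (ρm (x + h))
         - pedFlux c0 c1 c2 c3 (ρp (x - h)) (ρp x) (ρm (x - h)) (ρm x))
      ((1 - 2 * ρp x) * pedG c0 c1 c2 c3 (ρm x) * dp
          + pedF (ρp x) * (2 * (c3 - c2 - c1 + c0) * ρm x + (c2 + c1 - 2 * c0)) * dm) 0 := by
  have hp : HasDerivAt (fun h => ρp (x + h)) dp 0 := .comp_const_add x 0 (by rwa [add_zero])
  have hm : HasDerivAt (fun h => ρm (x + h)) dm 0 := .comp_const_add x 0 (by rwa [add_zero])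
  have hp' : HasDerivAt (fun h => ρp (x - h)) (-dp) 0 := .comp_const_sub x 0 (by rwa [sub_zero])
  have hm' : HasDerivAt (fun h => ρm (x - h)) (-dm) 0 := .comp_const_sub x 0 (by rwa [sub_zero])
  have forward : HasDerivAt (fun h => pedFlux c0 c1 c2 c3 (ρp x) (ρp (x + h)) (ρm x) (ρm (x + h)))
      (-ρp x * pedG c0 c1 c2 c3 (ρm x) * dp
        + pedF (ρp x) * (c2 - c0 + (c3 - c2 - c1 + c0) * ρm x) * dm) 0 := by
    refine (((hp.const_sub 1).const_mul (ρp x)).mul (hm.pedVel_right (ρm x))).congr_deriv ?_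
    simp only [add_zero, pedVel_self, pedF]
    ring
  have backward : HasDerivAt (fun h => pedFlux c0 c1 c2 c3 (ρp (x - h)) (ρp x) (ρm (x - h)) (ρm x))
      (-(1 - ρp x) * pedG c0 c1 c2 c3 (ρm x) * dp
        - pedF (ρp x) * (c1 - c0 + (c3 - c2 - c1 + c0) * ρm x) * dm) 0 := by
    refine ((hp'.mul_const (1 - ρp x)).mul (hm'.pedVel_left (ρm x))).congr_deriv ?_
    simp only [sub_zero, pedVel_self, pedF]
    ring
  refine (forward.sub backward).congr_deriv ?_
  unfold pedG
  ring

/-- The scaled discrete flux difference of the mesoscopic model converges, as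
the cell size `h` tends to `0`, to the spatial derivative of the macroscopic
flux `f(ρ⁺)g(ρ⁻)`, namely `f'(ρ⁺)g(ρ⁻)(ρ⁺)' + f(ρ⁺)g'(ρ⁻)(ρ⁻)'`. -/
theorem flux_difference_tendsto_macroscopic_derivative
    (c0 c1 c2 c3 : ℝ) (ρp ρm : ℝ → ℝ) (x dp dm : ℝ)
    (hρp : HasDerivAt ρp dp x) (hρm : HasDerivAt ρm dm x) :
    Tendsto (fun h : ℝ =>
        (pedFlux c0 c1 c2 c3 (ρp x) (ρp (x + h)) (ρm x) (ρm (x + h))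
         - pedFlux c0 c1 c2 c3 (ρp (x - h)) (ρp x) (ρm (x - h)) (ρm x)) / h)
      (𝓝[≠] (0 : ℝ))
      (𝓝 ((1 - 2 * ρp x) * pedG c0 c1 c2 c3 (ρm x) * dp
          + pedF (ρp x) * (2 * (c3 - c2 - c1 + c0) * ρm x + (c2 + c1 - 2 * c0)) * dm)) :=
  tendsto_div_nhdsNE_zero_of_hasDerivAt (hasDerivAt_pedFlux_difference c0 c1 c2 c3 hρp hρm)
    (by simp)
end
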